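/- (LH+ model, n = 1 case of Proposition 1) With a single large loan, the loss exceedance probability satisfies P(L > α) = Φ(A(α,0)) − P(V ≤ A(α,0), X_1 ≤ c_0) + P(V ≤ A(α,1), X_1 ≤ c_0), where the joint probabilities equal the bivariate standard normal distribution function with correlation √ρ_0 evaluated at the respective arguments. -/

import Mathlib

open MeasureTheory ProbabilityTheory

/-- The standard normal cumulative distribution function `Φ`. -/
noncomputable def Phi (x : ℝ) : ℝ := (gaussianReal 0 1 (Set.Iic x)).toReal

/-- The inverse of the standard normal cdf. -/
noncomputable def PhiInv : ℝ → ℝ := Function.invFun Phi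

/-- The standard normal cdf extended to the extended reals, `Φ(−∞) = 0`, `Φ(+∞) = 1`. -/
noncomputable def PhiE (a : EReal) : ℝ :=
  if a = ⊤ then 1 else if a = ⊥ then 0 else Phi a.toReal

/-- The bivariate standard normal distribution function with correlation `r`, with the
first argument in the extended reals:
`Φ₂(a, y; r) = ∫_{v ≤ a} Φ((y − r·v)/√(1−r²)) φ(v) dv`. -/
noncomputable def Phi2 (a : EReal) (y r : ℝ) : ℝ :=
  ∫ v in {v : ℝ | (v : EReal) ≤ a},
    Phi ((y - r * v) / Real.sqrt (1 - r ^ 2)) * gaussianPDFReal 0 1 v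

/-- The threshold `A(α,k)` of the LH++/LH+ model, in the extended reals, with the
conventions `Φ⁻¹(0) = −∞` (so `A = +∞`) and `Φ⁻¹(1) = +∞` (so `A = −∞`). -/
noncomputable def Athr (c ρ N R N0 R0 α : ℝ) (k : ℕ) : EReal :=
  if max 0 (min 1 ((α - k * N0 * (1 - R0)) / (N * (1 - R)))) ≤ 0 then ⊤
  else if 1 ≤ max 0 (min 1 ((α - k * N0 * (1 - R0)) / (N * (1 - R)))) then ⊥
  else ((c - Real.sqrt (1 - ρ) *
      PhiInv (max 0 (min 1 ((α - k * N0 * (1 - R0)) / (N * (1 - R)))))) / Real.sqrt ρ : ℝ)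

/-!
Given the state of the large loan, the loss exceeds `α` exactly when the granular part
`N(1−R)·Φ((c − √ρ·V)/√(1−ρ))` exceeds `α − k·N₀(1−R₀)` (`k = 1` if the loan defaults), and since
`Φ` is a strictly increasing bijection `ℝ → (0,1)` this is the event `V < A(α,k)`. As `V` has no
atoms, `<` may be replaced by `≤`; splitting `{V ≤ A(α,0)}` along the default event gives the
first identity. The joint probabilities are computed by Fubini on the law of the independent
pair `(V, ξ)`, conditioning on `V = v` leaving the Gaussian probability `Φ((c₀ − √ρ₀·v)/√(1−ρ₀))`.
-/

open Filter Set
open scoped NNReal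

namespace ProbabilityTheory

variable (μ : Measure ℝ) [IsProbabilityMeasure μ]

lemma continuous_cdf [NullSingletonClass μ] : Continuous (cdf μ) := by
  refine continuous_iff_continuousAt.2 fun x => continuousAt_iff_continuous_left_right.2
    ⟨?_, (cdf μ).right_continuous x⟩
  have hleft : Function.leftLim (cdf μ) x = cdf μ x := by
    have h := (cdf μ).measure_singleton x
    rw [measure_cdf, measure_singleton, eq_comm, ENNReal.ofReal_eq_zero, sub_nonpos] at h
    exact le_antisymm ((monotone_cdf μ).leftLim_le le_rfl) h
  exact continuousWithinAt_Iio_iff_Iic.1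
    ((monotone_cdf μ).continuousWithinAt_Iio_iff_leftLim_eq.2 hleft)

lemma strictMono_cdf (h : volume ≪ μ) : StrictMono (cdf μ) := by
  intro x y hxy
  have hpos : μ (Ioc x y) ≠ 0 := fun h0 => (by simpa using h h0 : y ≤ x).not_gt hxy
  rwa [← measure_cdf μ, StieltjesFunction.measure_Ioc, ne_eq, ENNReal.ofReal_eq_zero, not_le,
    sub_pos] at hpos

end ProbabilityTheory

lemma Phi_eq_cdf : Phi = cdf (gaussianReal 0 1) := funext fun x => (cdf_eq_real _ x).symm

lemma strictMono_Phi : StrictMono Phi :=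
  Phi_eq_cdf ▸ strictMono_cdf _ (gaussianReal_absolutelyContinuous' 0 one_ne_zero)

lemma continuous_Phi : Continuous Phi :=
  have := nullSingletonClass_gaussianReal (μ := 0) (one_ne_zero (α := ℝ≥0))
  Phi_eq_cdf ▸ continuous_cdf _

lemma Phi_pos (x : ℝ) : 0 < Phi x :=
  (Phi_eq_cdf ▸ cdf_nonneg _ (x - 1)).trans_lt (strictMono_Phi (sub_one_lt x))

lemma Phi_le_one (x : ℝ) : Phi x ≤ 1 := Phi_eq_cdf ▸ cdf_le_one _ x

lemma Phi_PhiInv {t : ℝ} (ht : t ∈ Ioo (0 : ℝ) 1) : Phi (PhiInv t) = t := by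
  refine Function.invFun_eq (mem_range_of_exists_le_of_exists_ge continuous_Phi ?_ ?_)
  · exact ((Phi_eq_cdf ▸ tendsto_cdf_atBot _).eventually (eventually_le_nhds ht.1)).exists
  · exact ((Phi_eq_cdf ▸ tendsto_cdf_atTop _).eventually (eventually_ge_nhds ht.2)).exists

lemma PhiInv_lt_iff {t : ℝ} (ht : t ∈ Ioo (0 : ℝ) 1) {u : ℝ} : PhiInv t < u ↔ t < Phi u := by
  conv_rhs => rw [← Phi_PhiInv ht]
  exact strictMono_Phi.lt_iff_lt.symm

lemma setIntegral_gaussianReal_eq {m : ℝ} {v : ℝ≥0} (hv : v ≠ 0) (f : ℝ → ℝ) (S : Set ℝ) :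
    ∫ x in S, f x ∂gaussianReal m v = ∫ x in S, f x * gaussianPDFReal m v x := by
  rw [gaussianReal_of_var_ne_zero _ hv, setIntegral_withDensity_eq_setIntegral_toReal_smul' S
    (measurable_gaussianPDF _ _) (ae_of_all _ fun _ => gaussianPDF_lt_top)]
  simp [toReal_gaussianPDF, mul_comm]

lemma coe_lt_Athr_iff {c ρ N R N0 R0 α : ℝ} {k : ℕ} (hρ : ρ ∈ Ioo (0 : ℝ) 1)
    (hNR : 0 < N * (1 - R)) (v : ℝ) :
    (v : EReal) < Athr c ρ N R N0 R0 α k ↔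
      α - k * N0 * (1 - R0) < N * (1 - R) * Phi ((c - √ρ * v) / √(1 - ρ)) := by
  rw [← div_lt_iff₀' hNR, Athr]
  set t := (α - k * N0 * (1 - R0)) / (N * (1 - R))
  split_ifs with h0 h1
  · have ht : t ≤ 0 := by simpa [not_le.2 zero_lt_one] using h0
    exact iff_of_true (EReal.coe_lt_top v) (ht.trans_lt (Phi_pos _))
  · have ht : 1 ≤ t := by simpa [not_le.2 zero_lt_one] using h1
    exact iff_of_false not_lt_bot (not_lt.2 ((Phi_le_one _).trans ht))
  · have ht : t ∈ Ioo 0 1 := by simp_all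
    have hs1 : 0 < √(1 - ρ) := Real.sqrt_pos.2 (sub_pos.2 hρ.2)
    have hs2 : 0 < √ρ := Real.sqrt_pos.2 hρ.1
    rw [max_eq_right (le_min zero_le_one ht.1.le), min_eq_right ht.2.le, EReal.coe_lt_coe_iff,
      ← PhiInv_lt_iff ht, lt_div_iff₀ hs2, lt_div_iff₀ hs1]
    constructor <;> intro <;> linarith

lemma setOf_lt_loss_eq {Ω : Type*} {V : Ω → ℝ} {ρ N R N0 R0 c α : ℝ} (hρ : ρ ∈ Ioo (0 : ℝ) 1)
    (hNR : 0 < N * (1 - R)) (D : Set Ω) :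
    {ω | α < N0 * (1 - R0) * D.indicator (fun _ => (1 : ℝ)) ω
        + N * (1 - R) * Phi ((c - √ρ * V ω) / √(1 - ρ))}
      = {ω | (V ω : EReal) < Athr c ρ N R N0 R0 α 0} \ D
        ∪ {ω | (V ω : EReal) < Athr c ρ N R N0 R0 α 1} ∩ D := by
  ext ω
  by_cases hω : ω ∈ D
  · simp only [mem_ofPred_eq, indicator_of_mem hω, mem_union, Set.mem_sdiff, mem_inter_iff, hω,
      coe_lt_Athr_iff hρ hNR, Nat.cast_one, one_mul, not_true, and_false, and_true, false_or]
    constructor <;> intro <;> linarith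
  · simp only [mem_ofPred_eq, indicator_of_notMem hω, mem_union, Set.mem_sdiff, mem_inter_iff,
      hω, coe_lt_Athr_iff hρ hNR, Nat.cast_zero, zero_mul, sub_zero, mul_zero, zero_add,
      not_false_eq_true, and_true, and_false, or_false]

section

variable {Ω : Type*} [MeasurableSpace Ω] {P : Measure Ω} {V ξ : Ω → ℝ}

lemma coe_lt_ae_eq_coe_le (hV : AEMeasurable V P) [NullSingletonClass (P.map V)] (A : EReal) :
    {ω | (V ω : EReal) < A} =ᵐ[P] {ω | (V ω : EReal) ≤ A} := by
  have h : {v : ℝ | (v : EReal) < A} =ᵐ[P.map V] {v : ℝ | (v : EReal) ≤ A} := by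
    refine ae_eq_set.2 ⟨measure_mono_null
      (fun v hv => (hv.2 (le_of_lt hv.1 : (v : EReal) ≤ A)).elim) measure_empty,
      measure_mono_null (t := {v | (v : EReal) = A}) ?_ (Set.Subsingleton.measure_zero ?_ _)⟩
    · exact fun v ⟨hle, hlt⟩ => eq_of_le_of_not_lt hle hlt
    · exact fun v hv w hw => EReal.coe_injective (hv.trans hw.symm)
  exact ae_eq_comp hV h

variable [IsProbabilityMeasure P]

lemma PhiE_eq_measureReal (hV : Measurable V) (hVlaw : P.map V = gaussianReal 0 1) (A : EReal) :
    PhiE A = P.real {ω | (V ω : EReal) ≤ A} := by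
  induction A with
  | bot => simp [PhiE]
  | top => simp [PhiE]
  | coe r =>
    have : {ω | (V ω : EReal) ≤ r} = V ⁻¹' Iic r := by ext; simp
    rw [this, ← map_measureReal_apply hV measurableSet_Iic, hVlaw, PhiE,
      if_neg (EReal.coe_ne_top r), if_neg (EReal.coe_ne_bot r), EReal.toReal_coe, Phi_eq_cdf,
      cdf_eq_real]

lemma measureReal_mem_and_add_mul_le (hV : Measurable V) (hξ : Measurable ξ)
    (hind : IndepFun V ξ P) (hξlaw : P.map ξ = gaussianReal 0 1) {S : Set ℝ}
    (hS : MeasurableSet S) (a : ℝ) {b : ℝ} (hb : 0 < b) (c : ℝ) :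
    P.real {ω | V ω ∈ S ∧ a * V ω + b * ξ ω ≤ c} = ∫ v in S, Phi ((c - a * v) / b) ∂P.map V := by
  set T := {p : ℝ × ℝ | p.1 ∈ S ∧ a * p.1 + b * p.2 ≤ c}
  set f := fun v => Phi ((c - a * v) / b)
  have hT : MeasurableSet T :=
    (measurable_fst hS).inter (measurableSet_le (f := fun p : ℝ × ℝ => a * p.1 + b * p.2)
      (by fun_prop) measurable_const)
  have hf : Measurable (S.indicator f) :=
    (continuous_Phi.measurable.comp (by fun_prop)).indicator hS
  have hmap : P.map (fun ω => (V ω, ξ ω)) = (P.map V).prod (gaussianReal 0 1) := by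
    rw [← hξlaw]
    exact (indepFun_iff_map_prod_eq_prod_map_map hV.aemeasurable hξ.aemeasurable).1 hind
  have hslice (v : ℝ) :
      gaussianReal 0 1 (Prod.mk v ⁻¹' T) = ENNReal.ofReal (S.indicator f v) := by
    by_cases hv : v ∈ S
    · have : Prod.mk v ⁻¹' T = Iic ((c - a * v) / b) := by
        ext x
        simp only [T, mem_preimage, mem_ofPred_eq, hv, true_and, mem_Iic, le_div_iff₀ hb]
        constructor <;> intro <;> linarith
      rw [this, indicator_of_mem hv, ← ofReal_cdf, ← Phi_eq_cdf]
    · simp [T, hv]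
  calc P.real {ω | V ω ∈ S ∧ a * V ω + b * ξ ω ≤ c}
      = ((P.map V).prod (gaussianReal 0 1) T).toReal := by
        rw [← hmap, Measure.map_apply (hV.prodMk hξ) hT]; rfl
    _ = (∫⁻ v, ENNReal.ofReal (S.indicator f v) ∂P.map V).toReal := by
        simp_rw [Measure.prod_apply hT, hslice]
    _ = ∫ v in S, f v ∂P.map V := by
        rw [← integral_indicator hS, integral_eq_lintegral_of_nonneg_ae
          (ae_of_all _ (indicator_nonneg fun v _ => (Phi_pos _).le)) hf.aestronglyMeasurable]

lemma measureReal_coe_le_and_le_eq_Phi2 (hV : Measurable V) (hξ : Measurable ξ)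
    (hind : IndepFun V ξ P) (hVlaw : P.map V = gaussianReal 0 1)
    (hξlaw : P.map ξ = gaussianReal 0 1) (A : EReal) (y : ℝ) {r : ℝ} (hr : r ^ 2 < 1) :
    P.real {ω | (V ω : EReal) ≤ A ∧ r * V ω + √(1 - r ^ 2) * ξ ω ≤ y} = Phi2 A y r := by
  rw [Phi2, ← setIntegral_gaussianReal_eq one_ne_zero, ← hVlaw]
  exact measureReal_mem_and_add_mul_le hV hξ hind hξlaw
    (measurable_coe_real_ereal measurableSet_Iic) r (Real.sqrt_pos.2 (sub_pos.2 hr)) y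

end

theorem lhplus_loss_exceedance_prob_general
    {Ω : Type*} [MeasureSpace Ω] [IsProbabilityMeasure (ℙ : Measure Ω)]
    (V ε ξ : Ω → ℝ) (hV : Measurable V) (hξ : Measurable ξ)
    (hVlaw : Measure.map V ℙ = gaussianReal 0 1)
    (hξlaw : Measure.map ξ ℙ = gaussianReal 0 1)
    (hindep : iIndepFun ![V, ε, ξ] ℙ)
    (ρ ρ0 : ℝ) (hρ : ρ ∈ Set.Ioo (0 : ℝ) 1) (hρ0 : ρ0 ∈ Set.Ioo (0 : ℝ) 1)
    (c c0 : ℝ) (R R0 : ℝ) (hR : R ∈ Set.Ico (0 : ℝ) 1)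
    (N N0 : ℝ) (hN : 0 < N)
    (X1 : Ω → ℝ)
    (hX1 : X1 = fun ω => Real.sqrt ρ0 * V ω + Real.sqrt (1 - ρ0) * ξ ω)
    (L : Ω → ℝ)
    (hL : L = fun ω =>
      N0 * (1 - R0) * Set.indicator {ω' | X1 ω' ≤ c0} (fun _ => (1 : ℝ)) ω
        + N * (1 - R) * Phi ((c - Real.sqrt ρ * V ω) / Real.sqrt (1 - ρ)))
    (α : ℝ) :
    (ℙ {ω | α < L ω}).toReal
      = PhiE (Athr c ρ N R N0 R0 α 0)
        - (ℙ {ω | (V ω : EReal) ≤ Athr c ρ N R N0 R0 α 0 ∧ X1 ω ≤ c0}).toReal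
        + (ℙ {ω | (V ω : EReal) ≤ Athr c ρ N R N0 R0 α 1 ∧ X1 ω ≤ c0}).toReal
      ∧ ∀ k : Fin 2,
          (ℙ {ω | (V ω : EReal) ≤ Athr c ρ N R N0 R0 α k ∧ X1 ω ≤ c0}).toReal
            = Phi2 (Athr c ρ N R N0 R0 α k) c0 (Real.sqrt ρ0) := by
  have hNR : 0 < N * (1 - R) := mul_pos hN (sub_pos.2 hR.2)
  have hD : MeasurableSet {ω | X1 ω ≤ c0} := measurableSet_le (hX1 ▸ by fun_prop) measurable_const
  have : NullSingletonClass (Measure.map V ℙ) := hVlaw ▸ nullSingletonClass_gaussianReal one_ne_zero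
  have hjoint (A : EReal) :
      (ℙ {ω | (V ω : EReal) ≤ A ∧ X1 ω ≤ c0}).toReal = Phi2 A c0 √ρ0 := by
    have hρ0' : √(1 - ρ0) = √(1 - √ρ0 ^ 2) := by rw [Real.sq_sqrt hρ0.1.le]
    rw [hX1, hρ0']
    exact measureReal_coe_le_and_le_eq_Phi2 hV hξ (hindep.indepFun (i := 0) (j := 2) (by decide))
      hVlaw hξlaw A c0 (by rw [Real.sq_sqrt hρ0.1.le]; exact hρ0.2)
  refine ⟨?_, fun k => hjoint _⟩
  simp only [← measureReal_def, ofPred_and]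
  rw [hL, setOf_lt_loss_eq hρ hNR]
  set D := {ω | X1 ω ≤ c0}
  have hDD : D =ᵐ[ℙ] D := EventuallyEq.rfl
  rw [measureReal_union (disjoint_sdiff_left.mono_right inter_subset_right)
      ((measurableSet_lt (f := fun ω => (V ω : EReal)) (by fun_prop) measurable_const).inter hD),
    measureReal_congr ((coe_lt_ae_eq_coe_le hV.aemeasurable _).diff hDD),
    measureReal_congr ((coe_lt_ae_eq_coe_le hV.aemeasurable _).inter hDD),
    PhiE_eq_measureReal hV hVlaw]
  linarith [measureReal_inter_add_sdiff (μ := ℙ)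
    (s := {ω | (V ω : EReal) ≤ Athr c ρ N R N0 R0 α 0}) hD]

/-- **LH+ model, `n = 1` case of Proposition 1.** With a single large loan,
`P(L > α) = Φ(A(α,0)) − P(V ≤ A(α,0), X₁ ≤ c₀) + P(V ≤ A(α,1), X₁ ≤ c₀)`, where the joint
probabilities equal the bivariate standard normal distribution function with correlation
`√ρ₀` evaluated at the respective arguments. -/
theorem lhplus_loss_exceedance_prob
    {Ω : Type*} [MeasureSpace Ω] [IsProbabilityMeasure (ℙ : Measure Ω)]
    (V ε ξ : Ω → ℝ) (hV : Measurable V) (hε : Measurable ε) (hξ : Measurable ξ)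
    (hVlaw : Measure.map V ℙ = gaussianReal 0 1)
    (hεlaw : Measure.map ε ℙ = gaussianReal 0 1)
    (hξlaw : Measure.map ξ ℙ = gaussianReal 0 1)
    (hindep : iIndepFun ![V, ε, ξ] ℙ)
    (ρ ρ0 : ℝ) (hρ : ρ ∈ Set.Ioo (0 : ℝ) 1) (hρ0 : ρ0 ∈ Set.Ioo (0 : ℝ) 1)
    (c c0 : ℝ) (R R0 : ℝ) (hR : R ∈ Set.Ico (0 : ℝ) 1) (hR0 : R0 ∈ Set.Ico (0 : ℝ) 1)
    (N N0 : ℝ) (hN : 0 < N) (hN0 : 0 < N0) (hsum : N + N0 = 1)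
    (X1 : Ω → ℝ)
    (hX1 : X1 = fun ω => Real.sqrt ρ0 * V ω + Real.sqrt (1 - ρ0) * ξ ω)
    (L : Ω → ℝ)
    (hL : L = fun ω =>
      N0 * (1 - R0) * Set.indicator {ω' | X1 ω' ≤ c0} (fun _ => (1 : ℝ)) ω
        + N * (1 - R) * Phi ((c - Real.sqrt ρ * V ω) / Real.sqrt (1 - ρ)))
    (α : ℝ) :
    (ℙ {ω | α < L ω}).toReal
      = PhiE (Athr c ρ N R N0 R0 α 0)
        - (ℙ {ω | (V ω : EReal) ≤ Athr c ρ N R N0 R0 α 0 ∧ X1 ω ≤ c0}).toReal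
        + (ℙ {ω | (V ω : EReal) ≤ Athr c ρ N R N0 R0 α 1 ∧ X1 ω ≤ c0}).toReal
      ∧ ∀ k : Fin 2,
          (ℙ {ω | (V ω : EReal) ≤ Athr c ρ N R N0 R0 α k ∧ X1 ω ≤ c0}).toReal
            = Phi2 (Athr c ρ N R N0 R0 α k) c0 (Real.sqrt ρ0) :=
  lhplus_loss_exceedance_prob_general V ε ξ hV hξ hVlaw hξlaw hindep ρ ρ0 hρ hρ0 c c0 R R0 hR N N0
    hN X1 hX1 L hL α
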